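/- Fix k > 0, y ∈ ℝ³ and an index j ∈ {1,2,3}, and let u(x) := e^{ik‖x−y‖}/(4π‖x−y‖) for x ≠ y. Let v(x) := ∂ⱼu(x) be the j-th partial derivative of u. Then the function x ↦ ∇v(x)·x − i k ‖x‖ v(x) tends to 0 as ‖x‖ → ∞; in other words, the first-order derivatives of the Helmholtz Green's function satisfy the Sommerfeld radiation condition. -/

import Mathlib

/-- The free-space Helmholtz Green's function `G(x,y) = e^{ik‖x−y‖}/(4π‖x−y‖)`
with source point `y`, as a function of `x`. -/
noncomputable def helmholtzGreen (k : ℝ) (y x : EuclideanSpace ℝ (Fin 3)) : ℂ :=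
  Complex.exp (Complex.I * (k : ℂ) * (‖x - y‖ : ℂ)) / ((4 * Real.pi * ‖x - y‖ : ℝ) : ℂ)

/-!
Write `r = ‖x - y‖`. The Green's function is radial, `u = φ(r)` with `φ' = r ψ`, so
`v = ∂ₐu = ⟪a, x - y⟫ ψ(r)`. Differentiating once more and splitting `x = (x - y) + y`,
`‖x‖ = r + (‖x‖ - r)`, the residual `∇v·x - i k ‖x‖ v` is `⟪a, x - y⟫ (φ'' - i k φ')(r)` plus
three terms carrying one of the factors `⟪a, y⟫`, `⟪x - y, y⟫ / r`, `‖x‖ - r`, all `O(1)`.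
Now `ψ` and `ψ'` are `O(r⁻²)`, and so is `φ'' - i k φ' = e^{ikr} (2 - i k r) / (4π r³)`: the
`k² r²` terms cancel, as `φ'` itself satisfies the one-dimensional radiation condition.
Hence the residual is `O(1/r)`.
-/

open Complex Filter Real Topology
open scoped RealInnerProductSpace

section Radial

variable {E F : Type*} [NormedAddCommGroup E] [InnerProductSpace ℝ E]
  [NormedAddCommGroup F] [NormedSpace ℝ F] {x y : E}

theorem hasFDerivAt_norm_sub (h : x ≠ y) :
    HasFDerivAt (fun z => ‖z - y‖) (‖x - y‖⁻¹ • innerSL ℝ (x - y)) x := by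
  have hpos : 0 < ‖x - y‖ := norm_pos_iff.2 (sub_ne_zero.2 h)
  have hsqrt := (hasDerivAt_sqrt (pow_pos hpos 2).ne').comp_hasFDerivAt x
    ((hasFDerivAt_id x).sub_const y).norm_sq
  simp only [Function.comp_def, sqrt_sq (norm_nonneg _), id] at hsqrt
  refine hsqrt.congr_fderiv ?_
  ext v
  simp only [one_div, mul_inv_rev, map_sub, ContinuousLinearMap.comp_id, smul_apply, sub_apply,
    coe_innerSL_apply, nsmul_eq_mul, Nat.cast_ofNat, smul_eq_mul]
  field_simp

theorem HasDerivAt.hasFDerivAt_comp_norm_sub {g : ℝ → F} {g' : F}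
    (hg : HasDerivAt g g' ‖x - y‖) (h : x ≠ y) :
    HasFDerivAt (fun z => g ‖z - y‖) ((‖x - y‖⁻¹ • innerSL ℝ (x - y)).smulRight g') x :=
  (hg.hasFDerivAt.comp x (hasFDerivAt_norm_sub h)).congr_fderiv <| by ext; rfl

theorem fderiv_comp_norm_sub_apply {g : ℝ → F} {g' : F} (hg : HasDerivAt g g' ‖x - y‖)
    (h : x ≠ y) (b : E) :
    fderiv ℝ (fun z => g ‖z - y‖) x b = (⟪x - y, b⟫ / ‖x - y‖) • g' := by
  rw [(hg.hasFDerivAt_comp_norm_sub h).fderiv]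
  simp only [ContinuousLinearMap.smulRight_apply, smul_apply, innerSL_apply_apply, smul_eq_mul,
    div_eq_inv_mul]

theorem fderiv_inner_smul_comp_norm_sub_apply {g : ℝ → F} {g' : F}
    (hg : HasDerivAt g g' ‖x - y‖) (h : x ≠ y) (a b : E) :
    fderiv ℝ (fun z => ⟪a, z - y⟫ • g ‖z - y‖) x b
      = (⟪a, x - y⟫ * ⟪x - y, b⟫ / ‖x - y‖) • g' + ⟪a, b⟫ • g ‖x - y‖ := by
  have hinner : HasFDerivAt (fun z => ⟪a, z - y⟫) (innerSL ℝ a) x :=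
    (innerSL ℝ a).hasFDerivAt.comp x ((hasFDerivAt_id x).sub_const y)
  rw [(hinner.fun_smul (hg.hasFDerivAt_comp_norm_sub h)).fderiv]
  simp only [add_apply, smul_apply, ContinuousLinearMap.smulRight_apply, innerSL_apply_apply,
    smul_eq_mul, smul_smul]
  ring_nf

end Radial

section Sommerfeld

variable {E : Type*} [NormedAddCommGroup E] [InnerProductSpace ℝ E] {x y : E}

noncomputable def sommerfeldResidual (k : ℝ) (v : E → ℂ) (x : E) : ℂ :=
  fderiv ℝ v x x - I * k * ‖x‖ * v x

theorem Filter.EventuallyEq.sommerfeldResidual_eq {k : ℝ} {v w : E → ℂ} (h : v =ᶠ[𝓝 x] w) :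
    sommerfeldResidual k v x = sommerfeldResidual k w x := by
  rw [sommerfeldResidual, sommerfeldResidual, h.fderiv_eq, h.eq_of_nhds]

theorem sommerfeldResidual_inner_smul_comp_norm_sub {k : ℝ} {g : ℝ → ℂ} {g' : ℂ}
    (hg : HasDerivAt g g' ‖x - y‖) (h : x ≠ y) (a : E) :
    sommerfeldResidual k (fun z => ⟪a, z - y⟫ • g ‖z - y‖) x
      = ⟪a, x - y⟫ • (g ‖x - y‖ + ‖x - y‖ * g' - I * k * ‖x - y‖ * g ‖x - y‖)
        + ⟪a, y⟫ • g ‖x - y‖ + (⟪a, x - y⟫ * ⟪x - y, y⟫ / ‖x - y‖) • g'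
        - I * k * (‖x‖ - ‖x - y‖) * (⟪a, x - y⟫ • g ‖x - y‖) := by
  have hr : (‖x - y‖ : ℂ) ≠ 0 := by simpa [sub_eq_zero] using h
  have hx : ⟪x - y, x⟫ = ‖x - y‖ ^ 2 + ⟪x - y, y⟫ := by
    rw [← real_inner_self_eq_norm_sq, ← inner_add_right, sub_add_cancel]
  have ha : ⟪a, x⟫ = ⟪a, x - y⟫ + ⟪a, y⟫ := by rw [← inner_add_right, sub_add_cancel]
  rw [sommerfeldResidual, fderiv_inner_smul_comp_norm_sub_apply hg h]
  simp only [Complex.real_smul, hx, ha]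
  push_cast
  field_simp
  ring

theorem norm_sommerfeldResidual_inner_smul_comp_norm_sub_le {k M : ℝ} {g : ℝ → ℂ} {g' : ℂ}
    (hg : HasDerivAt g g' ‖x - y‖) (hr : 1 ≤ ‖x - y‖) (a : E)
    (hbound : ‖g ‖x - y‖‖ ≤ M / ‖x - y‖ ^ 2) (hbound' : ‖g'‖ ≤ M / ‖x - y‖ ^ 2)
    (hdefect : ‖g ‖x - y‖ + ‖x - y‖ * g' - I * k * ‖x - y‖ * g ‖x - y‖‖ ≤ M / ‖x - y‖ ^ 2) :
    ‖sommerfeldResidual k (fun z => ⟪a, z - y⟫ • g ‖z - y‖) x‖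
      ≤ ‖a‖ * M * (1 + (2 + |k|) * ‖y‖) / ‖x - y‖ := by
  have h : x ≠ y := fun hxy => by norm_num [hxy] at hr
  rw [sommerfeldResidual_inner_smul_comp_norm_sub hg h]
  set r := ‖x - y‖
  set p := g r
  have hr0 : 0 < r := by linarith
  have hM : 0 ≤ M := by
    have := (norm_nonneg p).trans hbound
    rwa [le_div_iff₀ (by positivity), zero_mul] at this
  have hwa : |⟪a, x - y⟫| ≤ ‖a‖ * r := abs_real_inner_le_norm _ _
  have hya : |⟪a, y⟫| ≤ ‖a‖ * ‖y‖ := abs_real_inner_le_norm _ _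
  have hwy : |⟪x - y, y⟫| ≤ r * ‖y‖ := abs_real_inner_le_norm _ _
  have hxr : |‖x‖ - r| ≤ ‖y‖ := by simpa using abs_norm_sub_norm_le x (x - y)
  have hr2 : M / r ^ 2 ≤ M / r := div_le_div_of_nonneg_left hM hr0 (by nlinarith)
  have h1 : ‖⟪a, x - y⟫ • (p + r * g' - I * k * r * p)‖ ≤ ‖a‖ * M / r := by
    rw [norm_smul, Real.norm_eq_abs]
    calc _ ≤ (‖a‖ * r) * (M / r ^ 2) := by gcongr
      _ = ‖a‖ * M / r := by field_simp
  have h2 : ‖⟪a, y⟫ • p‖ ≤ ‖a‖ * ‖y‖ * M / r := by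
    rw [norm_smul, Real.norm_eq_abs]
    calc _ ≤ (‖a‖ * ‖y‖) * (M / r) := by gcongr; exact hbound.trans hr2
      _ = _ := by ring
  have h3 : ‖(⟪a, x - y⟫ * ⟪x - y, y⟫ / r) • g'‖ ≤ ‖a‖ * ‖y‖ * M / r := by
    rw [norm_smul, Real.norm_eq_abs, abs_div, abs_mul, abs_of_pos hr0]
    calc _ ≤ (‖a‖ * r * (r * ‖y‖) / r) * (M / r ^ 2) := by gcongr
      _ = _ := by field_simp
  have h4 : ‖I * k * (‖x‖ - r) * (⟪a, x - y⟫ • p)‖ ≤ |k| * ‖a‖ * ‖y‖ * M / r := by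
    simp only [← ofReal_sub, norm_mul, norm_smul, norm_I, norm_real, Real.norm_eq_abs, one_mul]
    calc _ ≤ |k| * ‖y‖ * ((‖a‖ * r) * (M / r ^ 2)) := by gcongr
      _ = _ := by field_simp
  calc _ ≤ ‖a‖ * M / r + ‖a‖ * ‖y‖ * M / r + ‖a‖ * ‖y‖ * M / r + |k| * ‖a‖ * ‖y‖ * M / r :=
        norm_sub_le_of_le (norm_add₃_le.trans (by gcongr)) h4
    _ = _ := by ring

end Sommerfeld

namespace Helmholtz

noncomputable def profile (k t : ℝ) : ℂ := cexp (I * k * t) / ((4 * π * t : ℝ) : ℂ)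

noncomputable def gradProfile (k t : ℝ) : ℂ :=
  cexp (I * k * t) * (I * k * t - 1) / (4 * π * t ^ 3)

noncomputable def gradProfileDeriv (k t : ℝ) : ℂ :=
  cexp (I * k * t) * (3 - 3 * I * k * t - k ^ 2 * t ^ 2) / (4 * π * t ^ 4)

theorem hasDerivAt_cexp_I_mul (k t : ℝ) :
    HasDerivAt (fun s : ℝ => cexp (I * k * s)) (I * k * cexp (I * k * t)) t := by
  simpa [mul_comm] using ((hasDerivAt_id t).ofReal_comp.const_mul (I * k)).cexp

theorem hasDerivAt_profile (k : ℝ) {t : ℝ} (ht : t ≠ 0) :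
    HasDerivAt (profile k) (t * gradProfile k t) t := by
  have hden := ((hasDerivAt_id t).const_mul (4 * π)).ofReal_comp
  refine ((hasDerivAt_cexp_I_mul k t).div hden (by simp [ht, pi_ne_zero])).congr_deriv ?_
  simp only [gradProfile, id]
  push_cast
  field_simp

theorem hasDerivAt_gradProfile (k : ℝ) {t : ℝ} (ht : t ≠ 0) :
    HasDerivAt (gradProfile k) (gradProfileDeriv k t) t := by
  have hlin := ((hasDerivAt_id t).ofReal_comp.const_mul (I * k)).sub_const 1
  have hden := ((hasDerivAt_id t).ofReal_comp.pow 3).const_mul (4 * (π : ℂ))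
  refine (((hasDerivAt_cexp_I_mul k t).mul hlin).div hden
    (by simp [ht, pi_ne_zero])).congr_deriv ?_
  simp only [gradProfileDeriv, id, Pi.pow_apply, Pi.mul_apply]
  push_cast
  field_simp
  linear_combination (k ^ 2 * t ^ 2 * (t : ℂ)⁻¹ ^ 4) * I_sq

theorem gradProfile_add_mul_gradProfileDeriv_sub (k t : ℝ) :
    gradProfile k t + t * gradProfileDeriv k t - I * k * t * gradProfile k t
      = cexp (I * k * t) * (2 - I * k * t) / (4 * π * t ^ 3) := by
  simp only [gradProfile, gradProfileDeriv]
  field_simp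
  linear_combination (-(k ^ 2 * t ^ 2 * (t : ℂ)⁻¹ ^ 3)) * I_sq

theorem norm_cexp_mul_div_le (k : ℝ) {t M : ℝ} {m : ℕ} {p : ℂ} (ht : 1 ≤ t)
    (hp : ‖p‖ ≤ M * t ^ m) :
    ‖cexp (I * k * t) * p / (4 * π * t ^ (m + 2))‖ ≤ M / t ^ 2 := by
  have ht0 : 0 < t := by linarith
  have hexp : ‖cexp (I * k * t)‖ = 1 := by simp [norm_exp]
  have hden : ‖(4 * π * t ^ (m + 2) : ℂ)‖ = 4 * π * t ^ (m + 2) := by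
    simp [abs_of_pos pi_pos, abs_of_pos ht0]
  rw [norm_div, norm_mul, hexp, one_mul, hden]
  calc ‖p‖ / (4 * π * t ^ (m + 2)) ≤ M * t ^ m / (1 * t ^ (m + 2)) :=
        div_le_div₀ ((norm_nonneg p).trans hp) hp (by positivity)
          (by gcongr; linarith [pi_gt_three])
    _ = M / t ^ 2 := by field_simp; ring

theorem norm_gradProfile_le (k : ℝ) {t : ℝ} (ht : 1 ≤ t) :
    ‖gradProfile k t‖ ≤ (2 + |k|) ^ 2 / t ^ 2 := by
  have ht0 : 0 < t := by linarith
  refine norm_cexp_mul_div_le k (m := 1) ht ?_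
  calc ‖I * k * t - 1‖ ≤ |k| * t + 1 := by
        simpa [abs_of_pos ht0] using norm_sub_le (I * k * t) 1
    _ ≤ (2 + |k|) ^ 2 * t ^ 1 := by
        nlinarith [mul_nonneg (abs_nonneg k) ht0.le, mul_nonneg (sq_nonneg |k|) ht0.le]

theorem norm_gradProfileDeriv_le (k : ℝ) {t : ℝ} (ht : 1 ≤ t) :
    ‖gradProfileDeriv k t‖ ≤ (2 + |k|) ^ 2 / t ^ 2 := by
  have ht0 : 0 < t := by linarith
  refine norm_cexp_mul_div_le k (m := 2) ht ?_
  have hsq : (3 : ℂ) - 3 * I * k * t - k ^ 2 * t ^ 2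
      = 3 - 3 * (I * k * t) + (I * k * t) ^ 2 := by
    linear_combination (-(k : ℂ) ^ 2 * t ^ 2) * I_sq
  calc ‖(3 : ℂ) - 3 * I * k * t - k ^ 2 * t ^ 2‖ ≤ 3 + 3 * (|k| * t) + (|k| * t) ^ 2 := by
        rw [hsq]
        refine (norm_add_le_of_le (norm_sub_le _ _) le_rfl).trans_eq ?_
        simp [abs_of_pos ht0, mul_pow]
    _ ≤ (2 + |k|) ^ 2 * t ^ 2 := by
        nlinarith [abs_nonneg k, mul_le_mul ht ht zero_le_one ht0.le,
          mul_le_mul_of_nonneg_left (mul_le_mul_of_nonneg_left ht ht0.le) (abs_nonneg k)]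

theorem norm_gradProfile_add_mul_gradProfileDeriv_sub_le (k : ℝ) {t : ℝ} (ht : 1 ≤ t) :
    ‖gradProfile k t + t * gradProfileDeriv k t - I * k * t * gradProfile k t‖
      ≤ (2 + |k|) ^ 2 / t ^ 2 := by
  have ht0 : 0 < t := by linarith
  rw [gradProfile_add_mul_gradProfileDeriv_sub]
  refine norm_cexp_mul_div_le k (m := 1) ht ?_
  calc ‖2 - I * k * t‖ ≤ 2 + |k| * t := by
        simpa [abs_of_pos ht0] using norm_sub_le (2 : ℂ) (I * k * t)
    _ ≤ (2 + |k|) ^ 2 * t ^ 1 := by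
        nlinarith [mul_nonneg (abs_nonneg k) ht0.le, mul_nonneg (sq_nonneg |k|) ht0.le]

section Green

variable {E : Type*} [NormedAddCommGroup E] [InnerProductSpace ℝ E] {x y : E}

noncomputable def green (k : ℝ) (y x : E) : ℂ := profile k ‖x - y‖

theorem fderiv_green_apply (k : ℝ) (h : x ≠ y) (a : E) :
    fderiv ℝ (green k y) x a = ⟪a, x - y⟫ • gradProfile k ‖x - y‖ := by
  have hr : ‖x - y‖ ≠ 0 := norm_ne_zero_iff.2 (sub_ne_zero.2 h)
  have hrc : (‖x - y‖ : ℂ) ≠ 0 := ofReal_ne_zero.2 hr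
  refine (fderiv_comp_norm_sub_apply (hasDerivAt_profile k hr) h a).trans ?_
  rw [real_inner_comm, Complex.real_smul, Complex.real_smul]
  push_cast
  field_simp

theorem norm_sommerfeldResidual_fderiv_green_le (k : ℝ) (a : E) (hr : 1 ≤ ‖x - y‖) :
    ‖sommerfeldResidual k (fun z => fderiv ℝ (green k y) z a) x‖
      ≤ ‖a‖ * (2 + |k|) ^ 2 * (1 + (2 + |k|) * ‖y‖) / ‖x - y‖ := by
  have h : x ≠ y := fun hxy => by norm_num [hxy] at hr
  have hev : (fun z => fderiv ℝ (green k y) z a)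
      =ᶠ[𝓝 x] fun z => ⟪a, z - y⟫ • gradProfile k ‖z - y‖ := by
    filter_upwards [isOpen_ne.mem_nhds h] with z hz using fderiv_green_apply k hz a
  rw [hev.sommerfeldResidual_eq]
  exact norm_sommerfeldResidual_inner_smul_comp_norm_sub_le
    (hasDerivAt_gradProfile k (by linarith)) hr a (norm_gradProfile_le k hr)
    (norm_gradProfileDeriv_le k hr) (norm_gradProfile_add_mul_gradProfileDeriv_sub_le k hr)

theorem tendsto_sommerfeldResidual_fderiv_green (k : ℝ) (y a : E) :
    Tendsto (sommerfeldResidual k (fun z => fderiv ℝ (green k y) z a)) (comap norm atTop)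
      (𝓝 0) := by
  have hr : Tendsto (fun x => ‖x - y‖) (comap norm atTop) atTop := by
    rw [comap_norm_atTop]
    exact tendsto_norm_cobounded_atTop.comp (tendsto_sub_const_cobounded y)
  refine squeeze_zero_norm' ?_
    ((tendsto_const_nhds (x := ‖a‖ * (2 + |k|) ^ 2 * (1 + (2 + |k|) * ‖y‖))).div_atTop hr)
  filter_upwards [hr.eventually_ge_atTop 1] with x hx
  exact norm_sommerfeldResidual_fderiv_green_le k a hx

end Green

end Helmholtz

theorem EuclideanSpace.sum_apply_single_mul {ι : Type*} [Fintype ι] [DecidableEq ι]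
    (L : EuclideanSpace ℝ ι →L[ℝ] ℂ) (x : EuclideanSpace ℝ ι) :
    ∑ l, L (EuclideanSpace.single l 1) * (x l : ℂ) = L x := by
  conv_rhs => rw [← (EuclideanSpace.basisFun ι ℝ).sum_repr x]
  simp [map_sum, Complex.real_smul, mul_comm]

theorem helmholtzGreen_deriv_sommerfeld_general (k : ℝ)
    (y : EuclideanSpace ℝ (Fin 3)) (j : Fin 3) :
    Filter.Tendsto
      (fun x : EuclideanSpace ℝ (Fin 3) =>
        (∑ l : Fin 3,
          fderiv ℝ (fun z => fderiv ℝ (helmholtzGreen k y) z (EuclideanSpace.single j 1)) x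
              (EuclideanSpace.single l 1) * ((x l : ℝ) : ℂ))
          - Complex.I * (k : ℂ) * (‖x‖ : ℂ)
              * fderiv ℝ (helmholtzGreen k y) x (EuclideanSpace.single j 1))
      (Filter.comap norm Filter.atTop) (nhds 0) := by
  simp_rw [EuclideanSpace.sum_apply_single_mul]
  -- `helmholtzGreen k y` is `Helmholtz.green k y` on `ℝ³` by definition
  exact Helmholtz.tendsto_sommerfeldResidual_fderiv_green k y _

theorem helmholtzGreen_deriv_sommerfeld (k : ℝ) (hk : 0 < k)
    (y : EuclideanSpace ℝ (Fin 3)) (j : Fin 3) :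
    Filter.Tendsto
      (fun x : EuclideanSpace ℝ (Fin 3) =>
        (∑ l : Fin 3,
          fderiv ℝ (fun z => fderiv ℝ (helmholtzGreen k y) z (EuclideanSpace.single j 1)) x
              (EuclideanSpace.single l 1) * ((x l : ℝ) : ℂ))
          - Complex.I * (k : ℂ) * (‖x‖ : ℂ)
              * fderiv ℝ (helmholtzGreen k y) x (EuclideanSpace.single j 1))
      (Filter.comap norm Filter.atTop) (nhds 0) :=
  helmholtzGreen_deriv_sommerfeld_general k y j
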